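/- arXiv:1712.02492 — 3 statements merged into one kernel-verified Lean document; each statement's English description precedes it below -/
import Mathlib

section
/- Discrete comparison principle: let 𝒩 be a nodal set in ℝ^d in which every interior node lies in the topological interior of conv(𝒩), let w_h be a convex nodal function and v_h any nodal function on 𝒩. If v_h(x_i) ≥ w_h(x_i) for all boundary nodes x_i ∈ 𝒩ᴮ and vol(∂v_h(x_i)) ≤ vol(∂w_h(x_i)) for all interior nodes x_i ∈ 𝒩ᴵ, then v_h(x_i) ≥ w_h(x_i) for all x_i ∈ 𝒩. -/
open scoped BigOperators RealInnerProductSpace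
open MeasureTheory
open scoped Classical

noncomputable section

/-- `ℝ^d` with the Euclidean inner product. -/
abbrev Euc (d : ℕ) := EuclideanSpace ℝ (Fin d)

/-- Subdifferential of a nodal function `u` at a node `z`, relative to the nodal set `N`. -/
def nodalSubdiff {d : ℕ} (N : Finset (Euc d)) (u : Euc d → ℝ) (z : Euc d) : Set (Euc d) :=
  {p | ∀ y ∈ N, u z + ⟪p, y - z⟫ ≤ u y}

/-- A nodal function is convex if its subdifferential is nonempty at every interior node. -/
def IsConvexNodal {d : ℕ} (NI N : Finset (Euc d)) (u : Euc d → ℝ) : Prop :=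
  ∀ z ∈ NI, (nodalSubdiff N u z).Nonempty

/-- The convex envelope of a nodal function: the sup of affine functions lying below `u`
on the nodal set `N`. -/
def convEnv {d : ℕ} (N : Finset (Euc d)) (u : Euc d → ℝ) (x : Euc d) : ℝ :=
  sSup {t : ℝ | ∃ (q : Euc d) (c : ℝ), (∀ y ∈ N, ⟪q, y⟫ + c ≤ u y) ∧ t = ⟪q, x⟫ + c}

/-- Subdifferential of the convex envelope of a nodal function at a node `z`
(supporting slopes over the convex hull of the nodal set). -/
def envSubdiff {d : ℕ} (N : Finset (Euc d)) (u : Euc d → ℝ) (z : Euc d) : Set (Euc d) :=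
  {p | ∀ x ∈ convexHull ℝ (N : Set (Euc d)),
    convEnv N u z + ⟪p, x - z⟫ ≤ convEnv N u x}

/-- The vector in `ℝ^d` associated with an integer vector `e ∈ ℤ^d`. -/
def intVec {d : ℕ} (e : Fin d → ℤ) : Euc d := WithLp.toLp 2 (fun i => (e i : ℝ))

/-- Second-order difference of a nodal function `w` at `z` in direction `e ∈ ℤ^d`,
with nodal spacing `h`. -/
def delta2 {d : ℕ} (h : ℝ) (e : Fin d → ℤ) (w : Euc d → ℝ) (z : Euc d) : ℝ :=
  (w (z + h • intVec e) - 2 * w z + w (z - h • intVec e)) / (‖intVec e‖ ^ 2 * h ^ 2)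

/-! Suppose `w_h(z₀) > v_h(z₀)`. The perturbation `g = w_h + δ‖· - z₀‖ - (w_h(z₀) - v_h(z₀))/2`
stays below `w_h ≤ v_h` on the boundary for small `δ`, so the set `G` of nodes where `v_h < g`
consists of interior nodes and contains `z₀`. Lowering a supporting plane of `g` at a node of `G`
until it touches `v_h` shows that every slope of `g` on `G` is a slope of `v_h` on `G`, and
subdifferentials at distinct nodes meet only in hyperplanes; so the subgradient mass of `g` on
`G` is at most that of `v_h`, hence at most that of `w_h`. But adding the cone translates
`∂w_h(z)` for `z ≠ z₀` and fattens the compact set `∂w_h(z₀)` by a `δ`-ball, so the mass of `g`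
on `G` is strictly larger than that of `w_h`. -/

open scoped Pointwise
open Metric

theorem addHaar_setOf_linearMap_eq {E : Type*} [NormedAddCommGroup E] [NormedSpace ℝ E]
    [MeasurableSpace E] [BorelSpace E] [FiniteDimensional ℝ E] (μ : Measure E)
    [μ.IsAddHaarMeasure] {f : E →ₗ[ℝ] ℝ} (hf : f ≠ 0) (c : ℝ) : μ {x | f x = c} = 0 := by
  rcases Set.eq_empty_or_nonempty {x | f x = c} with h | ⟨x₀, hx₀⟩
  · rw [h, measure_empty]
  have hlevel : {x | f x = c} = (· + -x₀) ⁻¹' (LinearMap.ker f : Set E) := by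
    ext x
    simp only [Set.mem_ofPred_eq, Set.mem_preimage, SetLike.mem_coe, LinearMap.mem_ker, map_add,
      map_neg, hx₀.out]
    constructor <;> intro h <;> linarith
  rw [hlevel, measure_preimage_add_right]
  exact Measure.addHaar_submodule μ _ fun h => hf (LinearMap.ker_eq_top.mp h)

theorem IsCompact.measure_lt_measure_add_ball {E : Type*} [NormedAddCommGroup E]
    [NormedSpace ℝ E] [Nontrivial E] [MeasurableSpace E] [OpensMeasurableSpace E]
    (μ : Measure E) [IsFiniteMeasureOnCompacts μ] [μ.IsOpenPosMeasure] {K : Set E}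
    (hK : IsCompact K) (hne : K.Nonempty) {δ : ℝ} (hδ : 0 < δ) :
    μ K < μ (K + ball 0 δ) := by
  obtain ⟨e, he⟩ := exists_norm_eq E zero_le_one
  obtain ⟨f, hf, hfe⟩ := exists_dual_vector ℝ e (by simp [he])
  obtain ⟨q, hqK, hqmax⟩ := hK.exists_isMaxOn hne f.continuous.continuousOn
  -- a small ball beyond the supporting hyperplane `f = f q`, in the direction `e`
  set c := q + (δ / 2) • e
  have hfc : f c = f q + δ / 2 := by simp [c, hfe, he]
  have hsub : ball c (δ / 4) ⊆ K + ball 0 δ := by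
    intro x hx
    refine Set.mem_add.mpr ⟨q, hqK, x - q, ?_, add_sub_cancel q x⟩
    rw [mem_ball, dist_eq_norm] at hx
    have hcq : ‖c - q‖ = δ / 2 := by simp [c, norm_smul, he, abs_of_pos hδ]
    rw [mem_ball_zero_iff, ← sub_add_sub_cancel x c q]
    linarith [norm_add_le (x - c) (c - q)]
  have hdisj : Disjoint K (ball c (δ / 4)) := by
    refine Set.disjoint_left.mpr fun x hxK hxB => ?_
    rw [mem_ball, dist_eq_norm] at hxB
    have hf_dev : |f (x - c)| ≤ ‖x - c‖ := by
      simpa [hf] using f.le_opNorm (x - c)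
    have hfx : f x ≤ f q := hqmax hxK
    rw [map_sub, hfc] at hf_dev
    linarith [neg_abs_le (f x - (f q + δ / 2))]
  calc μ K < μ K + μ (ball c (δ / 4)) :=
        ENNReal.lt_add_right hK.measure_lt_top.ne (measure_ball_pos μ c (by positivity)).ne'
    _ = μ (K ∪ ball c (δ / 4)) := (measure_union hdisj measurableSet_ball).symm
    _ ≤ μ (K + ball 0 δ) :=
        measure_mono (Set.union_subset
          (fun x hx => Set.mem_add.mpr ⟨x, hx, 0, mem_ball_self hδ, add_zero x⟩) hsub)

theorem ENNReal.sum_lt_sum_of_le_of_lt {ι : Type*} {s : Finset ι} {f g : ι → ENNReal}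
    (hf : ∀ i ∈ s, f i ≠ ⊤) (hle : ∀ i ∈ s, f i ≤ g i) {i : ι} (hi : i ∈ s) (hlt : f i < g i) :
    ∑ j ∈ s, f j < ∑ j ∈ s, g j := by
  rw [← Finset.add_sum_erase s f hi, ← Finset.add_sum_erase s g hi]
  exact ENNReal.add_lt_add_of_lt_of_le
    (ENNReal.sum_ne_top.mpr fun j hj => hf j (Finset.mem_of_mem_erase hj)) hlt
    (Finset.sum_le_sum fun j hj => hle j (Finset.mem_of_mem_erase hj))

theorem Finset.exists_pos_forall_mul_le {ι : Type*} (s : Finset ι) (f : ι → ℝ) {ε : ℝ}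
    (hε : 0 < ε) : ∃ δ > 0, ∀ i ∈ s, δ * f i ≤ ε := by
  obtain ⟨C, hC⟩ := (s.image f).exists_le
  have hC' : 0 < |C| + 1 := by positivity
  refine ⟨ε / (|C| + 1), by positivity, fun i hi => ?_⟩
  calc ε / (|C| + 1) * f i ≤ ε / (|C| + 1) * (|C| + 1) := by
        gcongr
        linarith [hC _ (Finset.mem_image_of_mem f hi), le_abs_self C]
    _ = ε := div_mul_cancel₀ ε hC'.ne'

section NodalSubdiff

variable {d : ℕ} {N : Finset (Euc d)}

theorem isClosed_nodalSubdiff (N : Finset (Euc d)) (u : Euc d → ℝ) (z : Euc d) :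
    IsClosed (nodalSubdiff N u z) := by
  have h : nodalSubdiff N u z = ⋂ y ∈ N, {p : Euc d | u z + ⟪p, y - z⟫ ≤ u y} := by
    ext p; simp [nodalSubdiff]
  rw [h]
  exact isClosed_biInter fun y _ => isClosed_le (by fun_prop) continuous_const

theorem aedisjoint_nodalSubdiff (u : Euc d → ℝ) {z₁ z₂ : Euc d} (hz₁ : z₁ ∈ N) (hz₂ : z₂ ∈ N)
    (hne : z₁ ≠ z₂) : AEDisjoint volume (nodalSubdiff N u z₁) (nodalSubdiff N u z₂) := by
  -- a common slope of two supporting planes lies on a hyperplane orthogonal to `z₁ - z₂`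
  have hsub : nodalSubdiff N u z₁ ∩ nodalSubdiff N u z₂ ⊆
      {p | (innerSL ℝ (z₁ - z₂) : Euc d →ₗ[ℝ] ℝ) p = u z₁ - u z₂} := by
    rintro p ⟨h₁, h₂⟩
    have h₁₂ := h₁ z₂ hz₂
    have h₂₁ := h₂ z₁ hz₁
    rw [← neg_sub z₁ z₂, inner_neg_right] at h₁₂
    rw [Set.mem_ofPred_eq, ContinuousLinearMap.coe_coe, innerSL_apply_apply, real_inner_comm]
    linarith
  have hf : (innerSL ℝ (z₁ - z₂) : Euc d →ₗ[ℝ] ℝ) ≠ 0 := fun h => by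
    have := LinearMap.congr_fun h (z₁ - z₂)
    rw [ContinuousLinearMap.coe_coe, innerSL_apply_apply, LinearMap.zero_apply,
      inner_self_eq_zero, sub_eq_zero] at this
    exact hne this
  exact measure_mono_null hsub (addHaar_setOf_linearMap_eq volume hf _)

theorem mul_norm_le_of_mem_nodalSubdiff {u : Euc d → ℝ} {z p : Euc d} {ρ C : ℝ} (hρ : 0 ≤ ρ)
    (hball : closedBall z ρ ⊆ convexHull ℝ (N : Set (Euc d))) (hC : ∀ y ∈ N, u y ≤ C)
    (hp : p ∈ nodalSubdiff N u z) : ρ * ‖p‖ ≤ C - u z := by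
  have hhull : ∀ x ∈ convexHull ℝ (N : Set (Euc d)), ⟪p, x⟫ ≤ C - u z + ⟪p, z⟫ := by
    refine fun x hx => convexHull_min (fun y hy => ?_)
      (convex_halfSpace_le (innerₛₗ ℝ p).isLinear _) hx
    have := hp y hy
    rw [inner_sub_right] at this
    rw [Set.mem_ofPred_eq, innerₛₗ_apply_apply]
    linarith [hC y hy]
  rcases eq_or_ne p 0 with rfl | hp₀
  · simpa using hhull z (hball (mem_closedBall_self hρ))
  have hnp : 0 < ‖p‖ := norm_pos_iff.mpr hp₀
  have hx : z + (ρ / ‖p‖) • p ∈ closedBall z ρ := by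
    rw [mem_closedBall, dist_eq_norm, add_sub_cancel_left, norm_smul, Real.norm_eq_abs,
      abs_of_nonneg (by positivity), div_mul_cancel₀ ρ hnp.ne']
  have := hhull _ (hball hx)
  rw [inner_add_right, real_inner_smul_right, real_inner_self_eq_norm_sq] at this
  calc ρ * ‖p‖ = ρ / ‖p‖ * ‖p‖ ^ 2 := by field_simp
    _ ≤ C - u z := by linarith

theorem isBounded_nodalSubdiff (u : Euc d → ℝ) {z : Euc d}
    (hz : z ∈ interior (convexHull ℝ (N : Set (Euc d)))) :
    Bornology.IsBounded (nodalSubdiff N u z) := by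
  obtain ⟨ρ, hρ, hball⟩ :=
    nhds_basis_closedBall.mem_iff.mp (mem_interior_iff_mem_nhds.mp hz)
  obtain ⟨C, hC⟩ := (N.image u).exists_le
  refine isBounded_iff_forall_norm_le.mpr ⟨(C - u z) / ρ, fun p hp => ?_⟩
  rw [le_div_iff₀ hρ, mul_comm]
  exact mul_norm_le_of_mem_nodalSubdiff hρ.le hball
    (fun y hy => hC _ (Finset.mem_image_of_mem u hy)) hp

theorem exists_mem_nodalSubdiff_of_lt {v g : Euc d → ℝ} {z p : Euc d} (hz : z ∈ N)
    (hp : p ∈ nodalSubdiff N g z) (hlt : v z < g z) :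
    ∃ z' ∈ N, v z' < g z' ∧ p ∈ nodalSubdiff N v z' := by
  -- lower the plane of slope `p` until it touches the graph of `v`
  obtain ⟨z', hz', hmin⟩ := N.exists_min_image (fun y => v y - ⟪p, y⟫) ⟨z, hz⟩
  refine ⟨z', hz', ?_, fun y hy => ?_⟩
  · have := hp z' hz'
    rw [inner_sub_right] at this
    linarith [hmin z hz]
  · rw [inner_sub_right]
    linarith [hmin y hy]

theorem sum_volume_nodalSubdiff_le (N : Finset (Euc d)) (v g : Euc d → ℝ) :
    ∑ z ∈ N.filter (fun z => v z < g z), volume (nodalSubdiff N g z) ≤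
      ∑ z ∈ N.filter (fun z => v z < g z), volume (nodalSubdiff N v z) := by
  set G := N.filter fun z => v z < g z
  have hGN : ∀ z ∈ G, z ∈ N := fun z hz => (Finset.mem_filter.mp hz).1
  calc ∑ z ∈ G, volume (nodalSubdiff N g z) = volume (⋃ z ∈ G, nodalSubdiff N g z) :=
        (measure_biUnion_finset₀
          (fun z₁ hz₁ z₂ hz₂ hne => aedisjoint_nodalSubdiff g (hGN z₁ hz₁) (hGN z₂ hz₂) hne)
          fun z _ => (isClosed_nodalSubdiff N g z).measurableSet.nullMeasurableSet).symm
    _ ≤ volume (⋃ z ∈ G, nodalSubdiff N v z) := by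
        refine measure_mono (Set.iUnion₂_subset fun z hz p hp => ?_)
        obtain ⟨z', hz', hlt', hp'⟩ :=
          exists_mem_nodalSubdiff_of_lt (hGN z hz) hp (Finset.mem_filter.mp hz).2
        exact Set.mem_biUnion (Finset.mem_filter.mpr ⟨hz', hlt'⟩) hp'
    _ ≤ ∑ z ∈ G, volume (nodalSubdiff N v z) := measure_biUnion_finset_le _ _

theorem add_mem_nodalSubdiff_add {u φ : Euc d → ℝ} {z p q : Euc d}
    (hp : p ∈ nodalSubdiff N u z) (hq : q ∈ nodalSubdiff N φ z) :
    p + q ∈ nodalSubdiff N (u + φ) z := fun y hy => by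
  have := hp y hy
  have := hq y hy
  simp only [Pi.add_apply, inner_add_left]
  linarith

theorem volume_nodalSubdiff_le_add {u φ : Euc d → ℝ} {z : Euc d}
    (hφ : (nodalSubdiff N φ z).Nonempty) :
    volume (nodalSubdiff N u z) ≤ volume (nodalSubdiff N (u + φ) z) := by
  obtain ⟨q, hq⟩ := hφ
  rw [← measure_vadd volume q]
  refine measure_mono ?_
  rintro _ ⟨p, hp, rfl⟩
  show q + p ∈ _
  rw [add_comm q p]
  exact add_mem_nodalSubdiff_add hp hq

variable {z₀ : Euc d} {δ c : ℝ}

theorem mem_nodalSubdiff_cone_self {q : Euc d} (hq : ‖q‖ ≤ δ) :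
    q ∈ nodalSubdiff N (fun y => δ * ‖y - z₀‖ + c) z₀ := fun y _ => by
  have := (real_inner_le_norm q (y - z₀)).trans
    (mul_le_mul_of_nonneg_right hq (norm_nonneg _))
  simp only [sub_self, norm_zero, mul_zero, zero_add]
  linarith

theorem mem_nodalSubdiff_cone_of_ne {z : Euc d} (hz : z ≠ z₀) (hδ : 0 ≤ δ) :
    (δ / ‖z - z₀‖) • (z - z₀) ∈ nodalSubdiff N (fun y => δ * ‖y - z₀‖ + c) z := fun y _ => by
  have hw : 0 < ‖z - z₀‖ := norm_pos_iff.mpr (sub_ne_zero.mpr hz)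
  have key : ⟪z - z₀, y - z⟫ ≤ ‖z - z₀‖ * (‖y - z₀‖ - ‖z - z₀‖) := by
    rw [show y - z = (y - z₀) - (z - z₀) by abel, inner_sub_right, real_inner_self_eq_norm_sq]
    nlinarith [real_inner_le_norm (z - z₀) (y - z₀)]
  have := mul_le_mul_of_nonneg_left key (div_nonneg hδ hw.le)
  rw [real_inner_smul_left]
  field_simp at this ⊢
  linarith

theorem nodalSubdiff_cone_nonempty (z : Euc d) (hδ : 0 ≤ δ) :
    (nodalSubdiff N (fun y => δ * ‖y - z₀‖ + c) z).Nonempty := by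
  rcases eq_or_ne z z₀ with rfl | hz
  · exact ⟨0, mem_nodalSubdiff_cone_self (by simpa using hδ)⟩
  · exact ⟨_, mem_nodalSubdiff_cone_of_ne hz hδ⟩

theorem volume_nodalSubdiff_lt_add_cone (hd : 1 ≤ d) {u : Euc d → ℝ}
    (hz₀ : z₀ ∈ interior (convexHull ℝ (N : Set (Euc d))))
    (hne : (nodalSubdiff N u z₀).Nonempty) (hδ : 0 < δ) :
    volume (nodalSubdiff N u z₀) <
      volume (nodalSubdiff N (u + fun y => δ * ‖y - z₀‖ + c) z₀) := by
  have : Nonempty (Fin d) := ⟨⟨0, hd⟩⟩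
  have hK : IsCompact (nodalSubdiff N u z₀) :=
    (isBounded_nodalSubdiff u hz₀).isCompact_closure.of_isClosed_subset
      (isClosed_nodalSubdiff N u z₀) subset_closure
  refine (hK.measure_lt_measure_add_ball volume hne hδ).trans_le (measure_mono ?_)
  exact Set.add_subset_iff.mpr fun p hp q hq =>
    add_mem_nodalSubdiff_add hp (mem_nodalSubdiff_cone_self (mem_ball_zero_iff.mp hq).le)

end NodalSubdiff

theorem discrete_comparison_principle_general
    (d : ℕ) (hd : 1 ≤ d) (NI NB : Finset (Euc d))
    (hint : ∀ z ∈ NI, z ∈ interior (convexHull ℝ ((NI ∪ NB : Finset (Euc d)) : Set (Euc d))))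
    (vh wh : Euc d → ℝ)
    (hw : IsConvexNodal NI (NI ∪ NB) wh)
    (hbdry : ∀ z ∈ NB, wh z ≤ vh z)
    (hvol : ∀ z ∈ NI,
      volume (nodalSubdiff (NI ∪ NB) vh z) ≤ volume (nodalSubdiff (NI ∪ NB) wh z)) :
    ∀ z ∈ NI ∪ NB, wh z ≤ vh z := by
  by_contra! ⟨z₀, hz₀, hlt⟩
  set N := NI ∪ NB
  obtain ⟨δ, hδ, hδN⟩ := N.exists_pos_forall_mul_le (‖· - z₀‖) (half_pos (sub_pos.mpr hlt))
  set g := wh + fun y => δ * ‖y - z₀‖ + (vh z₀ - wh z₀) / 2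
  set G := N.filter fun z => vh z < g z
  have hz₀G : z₀ ∈ G := Finset.mem_filter.mpr ⟨hz₀, by
    simp only [g, Pi.add_apply, sub_self, norm_zero, mul_zero, zero_add]
    linarith⟩
  have hGI : ∀ z ∈ G, z ∈ NI := fun z hz => by
    obtain ⟨hzN, hzg⟩ := Finset.mem_filter.mp hz
    refine (Finset.mem_union.mp hzN).resolve_right fun hzB => ?_
    simp only [g, Pi.add_apply] at hzg
    linarith [hδN z hzN, hbdry z hzB]
  have hz₀I := hGI z₀ hz₀G
  have hmass : ∑ z ∈ G, volume (nodalSubdiff N wh z) < ∑ z ∈ G, volume (nodalSubdiff N g z) :=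
    ENNReal.sum_lt_sum_of_le_of_lt
      (fun z hz => (isBounded_nodalSubdiff wh (hint z (hGI z hz))).measure_lt_top.ne)
      (fun z _ => volume_nodalSubdiff_le_add (nodalSubdiff_cone_nonempty z hδ.le)) hz₀G
      (volume_nodalSubdiff_lt_add_cone hd (hint z₀ hz₀I) (hw z₀ hz₀I) hδ)
  exact hmass.not_ge ((sum_volume_nodalSubdiff_le N vh g).trans
    (Finset.sum_le_sum fun z hz => hvol z (hGI z hz)))

/-- Discrete comparison principle. -/
theorem discrete_comparison_principle
    (d : ℕ) (hd : 1 ≤ d) (NI NB : Finset (Euc d)) (hdisj : Disjoint NI NB)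
    (hint : ∀ z ∈ NI, z ∈ interior (convexHull ℝ ((NI ∪ NB : Finset (Euc d)) : Set (Euc d))))
    (vh wh : Euc d → ℝ)
    (hw : IsConvexNodal NI (NI ∪ NB) wh)
    (hbdry : ∀ z ∈ NB, wh z ≤ vh z)
    (hvol : ∀ z ∈ NI,
      volume (nodalSubdiff (NI ∪ NB) vh z) ≤ volume (nodalSubdiff (NI ∪ NB) wh z)) :
    ∀ z ∈ NI ∪ NB, wh z ≤ vh z :=
  discrete_comparison_principle_general d hd NI NB hint vh wh hw hbdry hvol
end
end

section
/- Estimate of second-order differences on the contact set: let 𝒩 be a nodal set in ℝ^d with nodal spacing h > 0, let u_h and v_h be convex nodal functions on 𝒩, let 0 < ε < 1, and set w_ε := u_h − (1−ε)v_h and w^ε := v_h − (1−ε)u_h. Let 𝒞_ε := {x_i ∈ 𝒩ᴵ : Γ(w_ε)(x_i) = w_ε(x_i)} and 𝒞^ε := {x_i ∈ 𝒩ᴵ : Γ(w^ε)(x_i) = w^ε(x_i)} be the corresponding contact sets. If x_i ∈ 𝒞_ε ∩ 𝒞^ε, then for every e ∈ ℤ^d \ {0} such that x_i + he ∈ 𝒩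 and x_i − he ∈ 𝒩, one has −ε δ_e v_h(x_i) ≤ δ_e(u_h − v_h)(x_i) ≤ (ε/(1−ε)) δ_e v_h(x_i). -/
open scoped BigOperators RealInnerProductSpace
open MeasureTheory
open scoped Classical

noncomputable section

/-!
At a contact point the convex envelope, which lies below the chord through `x_i ± h e`, agrees
with the function, so `w_ε` and `w^ε` have nonnegative second differences there. Both estimates
are rearrangements of `δ_e u_h ≥ (1 - ε) δ_e v_h` and `δ_e v_h ≥ (1 - ε) δ_e u_h`.
-/

section ConvexEnvelope

variable {d : ℕ} {N : Finset (Euc d)} {w : Euc d → ℝ}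

lemma convEnv_le_of_forall_minorant (hN : N.Nonempty) {x : Euc d} {b : ℝ}
    (hb : ∀ (q : Euc d) (c : ℝ), (∀ y ∈ N, ⟪q, y⟫ + c ≤ w y) → ⟪q, x⟫ + c ≤ b) :
    convEnv N w x ≤ b := by
  refine csSup_le ?_ ?_
  · set m := (N.image w).min' (hN.image w)
    refine ⟨⟪(0 : Euc d), x⟫ + m, 0, m, fun y hy => ?_, rfl⟩
    rw [inner_zero_left, zero_add]
    exact Finset.min'_le _ _ (Finset.mem_image_of_mem w hy)
  · rintro t ⟨q, c, hqc, rfl⟩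
    exact hb q c hqc

lemma convEnv_le_midpoint {z a : Euc d} (hp : z + a ∈ N) (hm : z - a ∈ N) :
    convEnv N w z ≤ (w (z + a) + w (z - a)) / 2 := by
  refine convEnv_le_of_forall_minorant ⟨_, hp⟩ fun q c hqc => ?_
  have h₁ := hqc _ hp
  have h₂ := hqc _ hm
  rw [inner_add_right] at h₁
  rw [inner_sub_right] at h₂
  linarith

lemma delta2_nonneg_of_convEnv_eq (h : ℝ) (e : Fin d → ℤ) {z : Euc d}
    (hc : convEnv N w z = w z)
    (hp : z + h • intVec e ∈ N) (hm : z - h • intVec e ∈ N) :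
    0 ≤ delta2 h e w z := by
  have := convEnv_le_midpoint (w := w) hp hm
  exact div_nonneg (by linarith) (by positivity)

end ConvexEnvelope

section SecondDifference

variable {d : ℕ} (h : ℝ) (e : Fin d → ℤ) (u v : Euc d → ℝ) (z : Euc d)

lemma delta2_sub :
    delta2 h e (fun y => u y - v y) z = delta2 h e u z - delta2 h e v z := by
  unfold delta2
  ring

lemma delta2_sub_const_mul (c : ℝ) :
    delta2 h e (fun y => u y - c * v y) z = delta2 h e u z - c * delta2 h e v z := by
  unfold delta2
  ring

end SecondDifference

theorem secondOrderDifference_estimate_on_contact_set_general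
    (d : ℕ) (NI NB : Finset (Euc d))
    (h : ℝ)
    (uh vh : Euc d → ℝ)
    (ε : ℝ) (hε1 : ε < 1)
    (xi : Euc d)
    -- `x_i` belongs to the contact set `𝒞_ε` of `w_ε = u_h - (1-ε) v_h`
    (hCb : convEnv (NI ∪ NB) (fun y => uh y - (1 - ε) * vh y) xi
      = uh xi - (1 - ε) * vh xi)
    -- `x_i` belongs to the contact set `𝒞^ε` of `w^ε = v_h - (1-ε) u_h`
    (hCa : convEnv (NI ∪ NB) (fun y => vh y - (1 - ε) * uh y) xi
      = vh xi - (1 - ε) * uh xi)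
    (e : Fin d → ℤ)
    (hep : xi + h • intVec e ∈ NI ∪ NB) (hem : xi - h • intVec e ∈ NI ∪ NB) :
    -ε * delta2 h e vh xi ≤ delta2 h e (fun y => uh y - vh y) xi ∧
      delta2 h e (fun y => uh y - vh y) xi ≤ (ε / (1 - ε)) * delta2 h e vh xi := by
  have hu := delta2_nonneg_of_convEnv_eq h e hCb hep hem
  have hv := delta2_nonneg_of_convEnv_eq h e hCa hep hem
  rw [delta2_sub_const_mul] at hu hv
  rw [delta2_sub]
  constructor
  · linarith
  · rw [div_mul_eq_mul_div, le_div_iff₀ (by linarith)]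
    linarith

/-- Estimate of second-order differences on the contact set. -/
theorem secondOrderDifference_estimate_on_contact_set
    (d : ℕ) (hd : 1 ≤ d) (NI NB : Finset (Euc d)) (hdisj : Disjoint NI NB)
    (h : ℝ) (hh : 0 < h)
    (uh vh : Euc d → ℝ)
    (hu : IsConvexNodal NI (NI ∪ NB) uh) (hv : IsConvexNodal NI (NI ∪ NB) vh)
    (ε : ℝ) (hε0 : 0 < ε) (hε1 : ε < 1)
    (xi : Euc d) (hxi : xi ∈ NI)
    -- `x_i` belongs to the contact set `𝒞_ε` of `w_ε = u_h - (1-ε) v_h`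
    (hCb : convEnv (NI ∪ NB) (fun y => uh y - (1 - ε) * vh y) xi
      = uh xi - (1 - ε) * vh xi)
    -- `x_i` belongs to the contact set `𝒞^ε` of `w^ε = v_h - (1-ε) u_h`
    (hCa : convEnv (NI ∪ NB) (fun y => vh y - (1 - ε) * uh y) xi
      = vh xi - (1 - ε) * uh xi)
    (e : Fin d → ℤ) (he : e ≠ 0)
    (hep : xi + h • intVec e ∈ NI ∪ NB) (hem : xi - h • intVec e ∈ NI ∪ NB) :
    -ε * delta2 h e vh xi ≤ delta2 h e (fun y => uh y - vh y) xi ∧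
      delta2 h e (fun y => uh y - vh y) xi ≤ (ε / (1 - ε)) * delta2 h e vh xi :=
  secondOrderDifference_estimate_on_contact_set_general d NI NB h uh vh ε hε1 xi hCb hCa e hep hem
end
end

section
/- One-sided contact-set bound: let 𝒩 be a nodal set in ℝ^d with nodal spacing h > 0, let u_h and v_h be convex nodal functions on 𝒩, let 0 < ε < 1, and set w_ε := u_h − (1−ε)v_h. If x_i belongs to the contact set 𝒞_ε := {x_i ∈ 𝒩ᴵ : Γ(w_ε)(x_i) = w_ε(x_i)}, then for every e ∈ ℤ^d \ {0} with x_i + he ∈ 𝒩 and x_i − he ∈ 𝒩 one has δ_e(v_h − u_h)(x_i) ≤ ε δ_e v_h(x_i). Consequently, if δ_e(v_h − u_h)(x_i) > ε δ_e v_h(x_i) for some such e, then x_i lies in the non-contact set S_ε := 𝒩ᴵ \ 𝒞_ε. -/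
open scoped BigOperators RealInnerProductSpace
open MeasureTheory
open scoped Classical

noncomputable section

/-! At a contact node `xᵢ` the convex envelope `Γ(w_ε)` touches `w_ε`. Every affine minorant `L`
of `w_ε` on the nodes satisfies `2 L(xᵢ) = L(xᵢ + he) + L(xᵢ - he) ≤ w_ε(xᵢ + he) + w_ε(xᵢ - he)`,
so taking the supremum gives `δ_e w_ε(xᵢ) ≥ 0`. Since `δ_e` is linear,
`δ_e (v_h - u_h) = ε δ_e v_h - δ_e w_ε ≤ ε δ_e v_h`. -/

theorem two_mul_convEnv_le {d : ℕ} (N : Finset (Euc d)) (w : Euc d → ℝ) (x v : Euc d)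
    (hplus : x + v ∈ N) (hminus : x - v ∈ N) :
    2 * convEnv N w x ≤ w (x + v) + w (x - v) := by
  obtain ⟨c, hc⟩ := (N.finite_toSet.image w).bddBelow
  have hne : {t : ℝ | ∃ (q : Euc d) (c : ℝ), (∀ y ∈ N, ⟪q, y⟫ + c ≤ w y) ∧
      t = ⟪q, x⟫ + c}.Nonempty :=
    ⟨c, 0, c, fun y hy => by simpa using hc (Set.mem_image_of_mem w hy), by simp⟩
  rw [← le_div_iff₀' two_pos]
  refine csSup_le hne ?_
  rintro t ⟨q, b, hqb, rfl⟩
  have hp := hqb _ hplus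
  have hm := hqb _ hminus
  rw [inner_add_right] at hp
  rw [inner_sub_right] at hm
  linarith

theorem delta2_nonneg {d : ℕ} (h : ℝ) (e : Fin d → ℤ) (w : Euc d → ℝ) (z : Euc d)
    (hw : 2 * w z ≤ w (z + h • intVec e) + w (z - h • intVec e)) :
    0 ≤ delta2 h e w z :=
  div_nonneg (by linarith) (by positivity)

theorem one_sided_contact_bound_general
    (d : ℕ) (NI NB : Finset (Euc d))
    (h : ℝ)
    (uh vh : Euc d → ℝ)
    (ε : ℝ) :
    -- First part: on the contact set `𝒞_ε` of `w_ε = u_h - (1-ε) v_h` one has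
    -- `δ_e (v_h - u_h)(x_i) ≤ ε δ_e v_h(x_i)`.
    (∀ xi ∈ NI,
      convEnv (NI ∪ NB) (fun y => uh y - (1 - ε) * vh y) xi
          = uh xi - (1 - ε) * vh xi →
      ∀ e : Fin d → ℤ, e ≠ 0 →
        xi + h • intVec e ∈ NI ∪ NB → xi - h • intVec e ∈ NI ∪ NB →
          delta2 h e (fun y => vh y - uh y) xi ≤ ε * delta2 h e vh xi) ∧
    -- Consequence: strict inequality for some direction forces membership in `S_ε`.
    (∀ xi ∈ NI,
      (∃ e : Fin d → ℤ, e ≠ 0 ∧ xi + h • intVec e ∈ NI ∪ NB ∧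
          xi - h • intVec e ∈ NI ∪ NB ∧
          ε * delta2 h e vh xi < delta2 h e (fun y => vh y - uh y) xi) →
      ¬ convEnv (NI ∪ NB) (fun y => uh y - (1 - ε) * vh y) xi
          = uh xi - (1 - ε) * vh xi) := by
  set w : Euc d → ℝ := fun y => uh y - (1 - ε) * vh y
  have contact : ∀ xi ∈ NI, convEnv (NI ∪ NB) w xi = w xi →
      ∀ e : Fin d → ℤ, e ≠ 0 →
        xi + h • intVec e ∈ NI ∪ NB → xi - h • intVec e ∈ NI ∪ NB →
          delta2 h e (fun y => vh y - uh y) xi ≤ ε * delta2 h e vh xi := by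
    intro xi _ hcontact e _ hplus hminus
    have hw := delta2_nonneg h e w xi
      (hcontact ▸ two_mul_convEnv_le (NI ∪ NB) w xi (h • intVec e) hplus hminus)
    have hsplit : delta2 h e (fun y => vh y - uh y) xi
        = ε * delta2 h e vh xi - delta2 h e w xi := by
      simp only [delta2, w]
      ring
    linarith
  refine ⟨contact, fun xi hxi ⟨e, he, hplus, hminus, hlt⟩ hcontact => ?_⟩
  exact (contact xi hxi hcontact e he hplus hminus).not_gt hlt

/-- One-sided contact-set bound, and the consequence that nodes with a large
second-order difference lie in the non-contact set. -/
theorem one_sided_contact_bound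
    (d : ℕ) (hd : 1 ≤ d) (NI NB : Finset (Euc d)) (hdisj : Disjoint NI NB)
    (h : ℝ) (hh : 0 < h)
    (uh vh : Euc d → ℝ)
    (hu : IsConvexNodal NI (NI ∪ NB) uh) (hv : IsConvexNodal NI (NI ∪ NB) vh)
    (ε : ℝ) (hε0 : 0 < ε) (hε1 : ε < 1) :
    -- First part: on the contact set `𝒞_ε` of `w_ε = u_h - (1-ε) v_h` one has
    -- `δ_e (v_h - u_h)(x_i) ≤ ε δ_e v_h(x_i)`.
    (∀ xi ∈ NI,
      convEnv (NI ∪ NB) (fun y => uh y - (1 - ε) * vh y) xi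
          = uh xi - (1 - ε) * vh xi →
      ∀ e : Fin d → ℤ, e ≠ 0 →
        xi + h • intVec e ∈ NI ∪ NB → xi - h • intVec e ∈ NI ∪ NB →
          delta2 h e (fun y => vh y - uh y) xi ≤ ε * delta2 h e vh xi) ∧
    -- Consequence: strict inequality for some direction forces membership in `S_ε`.
    (∀ xi ∈ NI,
      (∃ e : Fin d → ℤ, e ≠ 0 ∧ xi + h • intVec e ∈ NI ∪ NB ∧
          xi - h • intVec e ∈ NI ∪ NB ∧
          ε * delta2 h e vh xi < delta2 h e (fun y => vh y - uh y) xi) →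
      ¬ convEnv (NI ∪ NB) (fun y => uh y - (1 - ε) * vh y) xi
          = uh xi - (1 - ε) * vh xi) :=
  one_sided_contact_bound_general d NI NB h uh vh ε
end
end
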